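/- arXiv:1903.04606 — 2 statements merged into one kernel-verified Lean document; each statement's English description precedes it below -/
import Mathlib

section
/- Let R be a Dedekind domain with finite class group G and let α be an irreducible element of R with (α) = 𝔭₁⋯𝔭_k a product of prime ideals. Then k ≤ D(G), where D(G) is the Davenport constant of G. -/
/-!
The classes `[𝔭ᵢ]` multiply to the class of `(α)`, which is trivial. If the classes over a
nonempty proper set `S` of indices also multiplied to `1`, then so would those over its complement,
and `(α) = (∏_{i ∈ S} 𝔭ᵢ) * (∏_{i ∉ S} 𝔭ᵢ)` would split into two proper principal ideals `(β)(γ)`,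
making `α` associated to `βγ` with neither factor a unit. So the classes form a minimal
product-one sequence, whose length is at most the Davenport constant.
-/

/-- The Davenport constant of a commutative group `G`: the supremum of lengths of
minimal zero-(product-one-)sequences over `G`. -/
noncomputable def davenportConstant (G : Type*) [CommGroup G] : ℕ :=
  sSup {n : ℕ | ∃ g : Fin n → G, ∏ i, g i = 1 ∧
    ∀ S : Finset (Fin n), S.Nonempty → S ≠ Finset.univ → ∏ i ∈ S, g i ≠ 1}

open Finset nonZeroDivisors

/-- The prefix products `∏ i < j, g i` are pairwise distinct, since the quotient of two of them
is the product over a nonempty proper interval. -/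
theorem le_natCard_of_forall_prod_ne_one {G : Type*} [CancelCommMonoid G] [Finite G] {n : ℕ}
    {g : Fin n → G} (hg : ∀ S : Finset (Fin n), S.Nonempty → S ≠ univ → ∏ i ∈ S, g i ≠ 1) :
    n ≤ Nat.card G := by
  have prefix_injective : Function.Injective fun j : Fin n => ∏ i ∈ Iio j, g i := by
    suffices ∀ a b : Fin n, a < b → ∏ i ∈ Iio a, g i ≠ ∏ i ∈ Iio b, g i by
      intro a b hab
      by_contra hne
      rcases lt_or_gt_of_ne hne with h | h
      exacts [this a b h hab, this b a h hab.symm]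
    intro a b hab heq
    refine hg (Iio b \ Iio a) ⟨a, by simp [hab]⟩ (fun h => by simpa using h.ge (mem_univ b)) ?_
    rw [← mul_eq_right, prod_sdiff (Iio_subset_Iio hab.le), heq]
  simpa using Nat.card_le_card_of_injective _ prefix_injective

theorem le_davenportConstant {G : Type*} [CommGroup G] [Finite G] {n : ℕ} (g : Fin n → G)
    (hprod : ∏ i, g i = 1)
    (hmin : ∀ S : Finset (Fin n), S.Nonempty → S ≠ univ → ∏ i ∈ S, g i ≠ 1) :
    n ≤ davenportConstant G :=
  le_csSup ⟨Nat.card G, fun _ ⟨_, _, hg⟩ => le_natCard_of_forall_prod_ne_one hg⟩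
    ⟨g, hprod, hmin⟩

theorem Irreducible.eq_top_or_eq_top_of_span_eq_mul {R : Type*} [CommRing R] [IsDomain R]
    {α : R} (hα : Irreducible α) {I J : Ideal R} [I.IsPrincipal] [J.IsPrincipal]
    (h : Ideal.span {α} = I * J) : I = ⊤ ∨ J = ⊤ := by
  rw [← I.span_singleton_generator, ← J.span_singleton_generator] at h ⊢
  rw [Ideal.span_singleton_mul_span_singleton, Ideal.span_singleton_eq_span_singleton] at h
  simpa only [Ideal.span_singleton_eq_top] using (h.irreducible hα).isUnit_or_isUnit rfl

theorem Ideal.prod_ne_top_of_isPrime {R ι : Type*} [CommSemiring R] {s : Finset ι}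
    {𝔭 : ι → Ideal R} (hs : s.Nonempty) (hprime : ∀ i, (𝔭 i).IsPrime) : ∏ i ∈ s, 𝔭 i ≠ ⊤ := by
  obtain ⟨i, hi⟩ := hs
  exact ne_top_of_le_ne_top (hprime i).ne_top (prod_le_inf.trans (inf_le hi))

theorem ClassGroup.prod_mk0_eq_one_iff {R ι : Type*} [CommRing R] [IsDedekindDomain R]
    (s : Finset ι) (P : ι → (Ideal R)⁰) :
    ∏ i ∈ s, ClassGroup.mk0 (P i) = 1 ↔ (∏ i ∈ s, (P i : Ideal R)).IsPrincipal := by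
  rw [← map_prod, ← Submonoid.coe_finsetProd]
  exact ClassGroup.mk0_eq_one_iff (∏ i ∈ s, P i).2

theorem irreducible_prime_factor_count_le_davenport_general
    {R : Type*} [CommRing R] [IsDedekindDomain R]
    [Finite (ClassGroup R)]
    (α : R) (hα : Irreducible α)
    (k : ℕ) (𝔭 : Fin k → Ideal R)
    (hprime : ∀ i, (𝔭 i).IsPrime) (hbot : ∀ i, 𝔭 i ≠ ⊥)
    (hfac : Ideal.span {α} = ∏ i, 𝔭 i) :
    k ≤ davenportConstant (ClassGroup R) := by
  let P i : (Ideal R)⁰ := ⟨𝔭 i, mem_nonZeroDivisors_of_ne_zero (hbot i)⟩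
  have hclass (S : Finset (Fin k)) :
      ∏ i ∈ S, ClassGroup.mk0 (P i) = 1 ↔ (∏ i ∈ S, 𝔭 i).IsPrincipal :=
    ClassGroup.prod_mk0_eq_one_iff S P
  have hprod : ∏ i, ClassGroup.mk0 (P i) = 1 := (hclass univ).2 (hfac ▸ ⟨α, rfl⟩)
  refine le_davenportConstant _ hprod fun S hS hSuniv hSone => ?_
  have hScone : ∏ i ∈ Sᶜ, ClassGroup.mk0 (P i) = 1 := by
    rwa [← prod_mul_prod_compl S, hSone, one_mul] at hprod
  have : (∏ i ∈ S, 𝔭 i).IsPrincipal := (hclass S).1 hSone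
  have : (∏ i ∈ Sᶜ, 𝔭 i).IsPrincipal := (hclass Sᶜ).1 hScone
  rw [← prod_mul_prod_compl S] at hfac
  rcases hα.eq_top_or_eq_top_of_span_eq_mul hfac with h | h
  · exact Ideal.prod_ne_top_of_isPrime hS hprime h
  · have hSc : Sᶜ.Nonempty := nonempty_iff_ne_empty.2 ((compl_eq_empty_iff S).not.2 hSuniv)
    exact Ideal.prod_ne_top_of_isPrime hSc hprime h

theorem irreducible_prime_factor_count_le_davenport
    {R : Type*} [CommRing R] [IsDomain R] [IsDedekindDomain R]
    [Finite (ClassGroup R)]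
    (α : R) (hα : Irreducible α)
    (k : ℕ) (𝔭 : Fin k → Ideal R)
    (hprime : ∀ i, (𝔭 i).IsPrime) (hbot : ∀ i, 𝔭 i ≠ ⊥)
    (hfac : Ideal.span {α} = ∏ i, 𝔭 i) :
    k ≤ davenportConstant (ClassGroup R) :=
  irreducible_prime_factor_count_le_davenport_general α hα k 𝔭 hprime hbot hfac
end

section
/- Let R be a Dedekind domain with finite class group G and let x be an irreducible element with (x) = 𝔭₁^{t₁}⋯𝔭_k^{t_k} for distinct prime ideals 𝔭ᵢ. Then ω(x) ≤ t₁ + ⋯ + t_k ≤ D(G), where D(G) is the Davenport constant. -/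
open Finset
open scoped nonZeroDivisors

section Davenport

variable {G : Type*} [CommGroup G]

def IsMinimalProdOne {ι : Type*} [Fintype ι] (g : ι → G) : Prop :=
  ∏ i, g i = 1 ∧ ∀ S : Finset ι, S.Nonempty → S ≠ univ → ∏ i ∈ S, g i ≠ 1

/-- Two equal partial products `g₀ ⋯ gᵢ = g₀ ⋯ gⱼ` with `i < j` give `gᵢ₊₁ ⋯ gⱼ = 1`. -/
theorem exists_nonempty_ne_univ_prod_eq_one [Finite G] {n : ℕ} (g : Fin n → G)
    (hn : Nat.card G < n) : ∃ S : Finset (Fin n), S.Nonempty ∧ S ≠ univ ∧ ∏ i ∈ S, g i = 1 := by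
  obtain ⟨i, j, hij, heq⟩ : ∃ i j : Fin n, i < j ∧ ∏ l ∈ Iic i, g l = ∏ l ∈ Iic j, g l := by
    cases nonempty_fintype G
    obtain ⟨i, j, hne, h⟩ := Fintype.exists_ne_map_eq_of_card_lt (fun j => ∏ l ∈ Iic j, g l)
      (by simpa [Nat.card_eq_fintype_card] using hn)
    rcases hne.lt_or_gt with hlt | hlt
    exacts [⟨i, j, hlt, h⟩, ⟨j, i, hlt, h.symm⟩]
  refine ⟨Ioc i j, nonempty_Ioc.mpr hij, fun h => left_notMem_Ioc (h ▸ mem_univ i), ?_⟩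
  rwa [← Iic_union_Ioc_eq_Iic hij.le, prod_union (Iic_disjoint_Ioc le_rfl), left_eq_mul] at heq

theorem IsMinimalProdOne.le_natCard [Finite G] {n : ℕ} {g : Fin n → G}
    (hg : IsMinimalProdOne g) : n ≤ Nat.card G := by
  by_contra! hn
  obtain ⟨S, hS, hSu, h⟩ := exists_nonempty_ne_univ_prod_eq_one g hn
  exact hg.2 S hS hSu h

theorem IsMinimalProdOne.comp_equiv {ι κ : Type*} [Fintype ι] [Fintype κ] {g : ι → G}
    (hg : IsMinimalProdOne g) (e : κ ≃ ι) : IsMinimalProdOne (g ∘ e) := by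
  refine ⟨(e.prod_comp g).trans hg.1, fun S hS hSu => ?_⟩
  have := hg.2 (S.map e.toEmbedding) hS.map fun h => hSu (by rwa [← map_univ_equiv e, map_inj] at h)
  rwa [prod_map] at this

theorem IsMinimalProdOne.card_le_davenportConstant [Finite G] {ι : Type*} [Fintype ι]
    {g : ι → G} (hg : IsMinimalProdOne g) : Fintype.card ι ≤ davenportConstant G :=
  -- `sSup` of an unbounded set of naturals is `0`, so the bound `le_natCard` is needed here.
  le_csSup ⟨Nat.card G, fun _ ⟨_, h⟩ => IsMinimalProdOne.le_natCard h⟩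
    ⟨_, hg.comp_equiv (Fintype.equivFin ι).symm⟩

end Davenport

section Multiplicity

variable {α ι : Type*}

theorem exists_subset_card_le_le_sum (s : Finset ι) (m : ι → ℕ) {n : ℕ}
    (h : n ≤ ∑ j ∈ s, m j) : ∃ T ⊆ s, #T ≤ n ∧ n ≤ ∑ j ∈ T, m j := by
  classical
  induction s using Finset.induction generalizing n with
  | empty => exact ⟨∅, subset_rfl, by simp, by simpa using h⟩
  | insert a s ha ih =>
    rw [sum_insert ha] at h
    rcases Nat.eq_zero_or_pos n with rfl | hn
    · exact ⟨∅, empty_subset _, by simp, by simp⟩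
    by_cases hma : m a = 0
    · obtain ⟨T, hTs, hTn, hT⟩ := ih (n := n) (by omega)
      exact ⟨T, hTs.trans (subset_insert a s), hTn, hT⟩
    obtain ⟨T, hTs, hTn, hT⟩ := ih (n := n - m a) (by omega)
    have haT : a ∉ T := fun h => ha (hTs h)
    refine ⟨insert a T, insert_subset_insert a hTs, ?_, ?_⟩
    · rw [card_insert_of_notMem haT]; omega
    · rw [sum_insert haT]; omega

variable [CommMonoidWithZero α] [IsCancelMulZero α] [WfDvdMonoid α]

theorem Prime.pow_dvd_finset_prod_iff {p : α} (hp : Prime p) {s : Finset ι} {f : ι → α}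
    (hf : ∀ j ∈ s, f j ≠ 0) {n : ℕ} :
    p ^ n ∣ ∏ j ∈ s, f j ↔ n ≤ ∑ j ∈ s, multiplicity p (f j) := by
  rw [pow_dvd_iff_le_emultiplicity, emultiplicity_prod hp, sum_congr rfl fun j hj =>
    (FiniteMultiplicity.of_prime_left hp (hf j hj)).emultiplicity_eq_multiplicity]
  exact_mod_cast Iff.rfl

theorem Prime.exists_subset_card_le_pow_dvd_prod {p : α} (hp : Prime p) {s : Finset ι}
    {f : ι → α} (hf : ∀ j ∈ s, f j ≠ 0) {n : ℕ} (h : p ^ n ∣ ∏ j ∈ s, f j) :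
    ∃ T ⊆ s, #T ≤ n ∧ p ^ n ∣ ∏ j ∈ T, f j := by
  obtain ⟨T, hTs, hTn, hT⟩ :=
    exists_subset_card_le_le_sum s _ ((hp.pow_dvd_finset_prod_iff hf).mp h)
  exact ⟨T, hTs, hTn, (hp.pow_dvd_finset_prod_iff fun j hj => hf j (hTs hj)).mpr hT⟩

end Multiplicity

section Dedekind

variable {R : Type*} [CommRing R] [IsDedekindDomain R]

theorem Ideal.exists_subset_card_le_prod_pow_dvd_prod {κ ι : Type*} [Fintype κ]
    {𝔭 : κ → Ideal R} (hprime : ∀ i, (𝔭 i).IsPrime) (hbot : ∀ i, 𝔭 i ≠ ⊥)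
    (hdist : Function.Injective 𝔭) (t : κ → ℕ) {s : Finset ι} {J : ι → Ideal R}
    (hJ : ∀ j ∈ s, J j ≠ 0) (h : ∏ i, 𝔭 i ^ t i ∣ ∏ j ∈ s, J j) :
    ∃ T ⊆ s, #T ≤ ∑ i, t i ∧ ∏ i, 𝔭 i ^ t i ∣ ∏ j ∈ T, J j := by
  classical
  have hmax (i : κ) : (𝔭 i).IsMaximal := (hprime i).isMaximal (hbot i)
  choose T hTs hTcard hT using fun i : κ => Prime.exists_subset_card_le_pow_dvd_prod
    (Ideal.prime_of_isPrime (hbot i) (hprime i)) hJ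
    ((dvd_prod_of_mem (fun i => 𝔭 i ^ t i) (mem_univ i)).trans h)
  refine ⟨univ.biUnion T, biUnion_subset.mpr fun i _ => hTs i,
    card_biUnion_le.trans (sum_le_sum fun i _ => hTcard i), ?_⟩
  refine Fintype.prod_dvd_of_coprime (fun i j hij => ?_) fun i =>
    (hT i).trans (prod_dvd_prod_of_subset _ _ _ (subset_biUnion_of_mem T (mem_univ i)))
  exact (Ideal.isCoprime_iff_sup_eq.mpr ((hmax i).coprime_of_ne (hmax j) (hdist.ne hij))).pow

theorem Ideal.eq_top_or_eq_of_isPrincipal_of_dvd_span {x : R} (hx : Irreducible x)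
    {J : Ideal R} (hJ : J.IsPrincipal) (h : J ∣ Ideal.span {x}) : J = ⊤ ∨ J = Ideal.span {x} := by
  obtain ⟨y, rfl⟩ := hJ
  obtain ⟨z, rfl⟩ := Ideal.mem_span_singleton.mp (Ideal.dvd_span_singleton.mp h)
  rcases hx.isUnit_or_isUnit rfl with hy | hz
  · exact Or.inl (Ideal.span_singleton_eq_top.mpr hy)
  · exact Or.inr (Ideal.span_singleton_mul_right_unit hz y).symm

theorem isMinimalProdOne_mk0_of_prod_eq_span {ι : Type*} [Fintype ι] {I : ι → (Ideal R)⁰}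
    (hI : ∀ j, (I j : Ideal R) ≠ ⊤) {x : R} (hx : Irreducible x)
    (hprod : ∏ j, (I j : Ideal R) = Ideal.span {x}) :
    IsMinimalProdOne fun j => ClassGroup.mk0 (I j) := by
  classical
  have hclass (S : Finset ι) :
      ∏ j ∈ S, ClassGroup.mk0 (I j) = 1 ↔ (∏ j ∈ S, (I j : Ideal R)).IsPrincipal := by
    rw [← map_prod, ← Submonoid.coe_finsetProd, ← ClassGroup.mk0_eq_one_iff]
  have hempty (S : Finset ι) (h : ∏ j ∈ S, (I j : Ideal R) = 1) : S = ∅ :=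
    eq_empty_of_forall_notMem fun j hj =>
      hI j (Ideal.isUnit_iff.mp (IsUnit.prod_iff.mp (h ▸ isUnit_one) j hj))
  refine ⟨(hclass univ).mpr (hprod ▸ ⟨x, rfl⟩), fun S hS hSu h1 => ?_⟩
  have hdvd : ∏ j ∈ S, (I j : Ideal R) ∣ Ideal.span {x} :=
    hprod ▸ prod_dvd_prod_of_subset _ _ _ (subset_univ S)
  rcases Ideal.eq_top_or_eq_of_isPrincipal_of_dvd_span hx ((hclass S).mp h1) hdvd with htop | hS_eq
  · exact hS.ne_empty (hempty S (htop.trans Ideal.one_eq_top.symm))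
  · have hne : ∏ j ∈ S, (I j : Ideal R) ≠ 0 := by
      rw [hS_eq, Ne, Ideal.zero_eq_bot, Ideal.span_singleton_eq_bot]; exact hx.ne_zero
    have hcompl : ∏ j ∈ Sᶜ, (I j : Ideal R) = 1 := by
      rwa [← mul_eq_left₀ hne, prod_mul_prod_compl, hprod, eq_comm]
    exact hSu ((compl_eq_empty_iff S).mp (hempty _ hcompl))

end Dedekind

theorem omega_le_davenport_general
    {R : Type*} [CommRing R] [IsDedekindDomain R]
    [Finite (ClassGroup R)]
    (x : R) (hx : Irreducible x)
    (k : ℕ) (𝔭 : Fin k → Ideal R) (t : Fin k → ℕ)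
    (hprime : ∀ i, (𝔭 i).IsPrime) (hbot : ∀ i, 𝔭 i ≠ ⊥)
    (hdist : Function.Injective 𝔭)
    (hfac : Ideal.span {x} = ∏ i, 𝔭 i ^ t i) :
    (∀ (s : ℕ) (a : Fin s → R), (∀ i, Irreducible (a i)) → x ∣ ∏ i, a i →
        ∃ T : Finset (Fin s), T.card ≤ ∑ i, t i ∧ x ∣ ∏ i ∈ T, a i) ∧
      ∑ i, t i ≤ davenportConstant (ClassGroup R) := by
  refine ⟨fun s a ha hxa => ?_, ?_⟩
  · have hspan (T : Finset (Fin s)) :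
        x ∣ ∏ j ∈ T, a j ↔ ∏ i, 𝔭 i ^ t i ∣ ∏ j ∈ T, Ideal.span {a j} := by
      rw [← hfac, Ideal.prod_span_singleton, Ideal.dvd_span_singleton, Ideal.mem_span_singleton]
    obtain ⟨T, -, hT, hdvd⟩ := Ideal.exists_subset_card_le_prod_pow_dvd_prod hprime hbot hdist t
      (fun j _ => by simpa using (ha j).ne_zero) ((hspan univ).mp hxa)
    exact ⟨T, hT, (hspan T).mpr hdvd⟩
  · let P (i : Fin k) : (Ideal R)⁰ := ⟨𝔭 i, mem_nonZeroDivisors_of_ne_zero (hbot i)⟩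
    have hmin := isMinimalProdOne_mk0_of_prod_eq_span (I := fun σ : Σ i, Fin (t i) => P σ.1)
      (fun σ => (hprime σ.1).ne_top) hx (by simp [P, Fintype.prod_sigma, hfac])
    simpa using hmin.card_le_davenportConstant

theorem omega_le_davenport
    {R : Type*} [CommRing R] [IsDomain R] [IsDedekindDomain R]
    [Finite (ClassGroup R)]
    (x : R) (hx : Irreducible x)
    (k : ℕ) (𝔭 : Fin k → Ideal R) (t : Fin k → ℕ)
    (hprime : ∀ i, (𝔭 i).IsPrime) (hbot : ∀ i, 𝔭 i ≠ ⊥)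
    (hdist : Function.Injective 𝔭) (hpos : ∀ i, 0 < t i)
    (hfac : Ideal.span {x} = ∏ i, 𝔭 i ^ t i) :
    (∀ (s : ℕ) (a : Fin s → R), (∀ i, Irreducible (a i)) → x ∣ ∏ i, a i →
        ∃ T : Finset (Fin s), T.card ≤ ∑ i, t i ∧ x ∣ ∏ i ∈ T, a i) ∧
      ∑ i, t i ≤ davenportConstant (ClassGroup R) :=
  omega_le_davenport_general x hx k 𝔭 t hprime hbot hdist hfac
end
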